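/- arXiv:2302.02138 — 4 statements merged into one kernel-verified Lean document; each statement's English description precedes it below -/
import Mathlib

section
/- The upper asymptotic density of F equals 1/3. -/
open Filter Topology

def F : Set ℕ := {n | ∃ k, 3 * 4 ^ k ≤ n ∧ n < 4 ^ (k + 1)}

/-!
Inside each block `[4^k, 4^(k+1))`, `F` is exactly the top quarter `[3·4^k, 4^(k+1))`, so
`3·|F ∩ [0, 4^k)| + 1 = 4^k` and, in general, `3·|F ∩ [0, N)| ≤ N`. The density is thus at most
`1/3`, and along `N = 4^k` it equals `1/3 - 4^(-k)/3 → 1/3`.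
-/

theorem Filter.limsup_eq_of_eventually_le_of_mapClusterPt {α β : Type*}
    [ConditionallyCompleteLinearOrder α] [TopologicalSpace α] [OrderTopology α]
    {l : Filter β} {u : β → α} {c : α} (hle : ∀ᶠ n in l, u n ≤ c) (hc : MapClusterPt c l u) :
    l.limsup u = c :=
  have hcobdd : IsCoboundedUnder (· ≤ ·) l u :=
    ⟨c, fun _ ha => isClosed_Iic.mem_of_mapClusterPt hc ha⟩
  le_antisymm (limsup_le_of_le hcobdd hle) (hc.le_limsup ⟨c, hle⟩)

theorem Set.ncard_inter_Iio_eq_add {s : Set ℕ} {a N : ℕ} (h : a ≤ N) :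
    (s ∩ Set.Iio N).ncard = (s ∩ Set.Iio a).ncard + (s ∩ Set.Ico a N).ncard := by
  have hdisj : Disjoint (s ∩ Set.Iio a) (s ∩ Set.Ico a N) :=
    Set.disjoint_left.2 fun _ h₁ h₂ => not_le.2 h₁.2 h₂.2.1
  rw [← Set.Iio_union_Ico_eq_Iio h, Set.inter_union_distrib_left,
    Set.ncard_union_eq hdisj ((Set.finite_Iio a).inter_of_right s)
      ((Set.finite_Ico a N).inter_of_right s)]

theorem three_mul_pow_le_of_mem_F {n k : ℕ} (hn : n ∈ F) (h₁ : 4 ^ k ≤ n) (h₂ : n < 4 ^ (k + 1)) :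
    3 * 4 ^ k ≤ n := by
  obtain ⟨j, hj₁, hj₂⟩ := hn
  have hj : 4 ^ j ≤ n := le_trans (Nat.le_mul_of_pos_left _ (by norm_num)) hj₁
  rwa [← Nat.log_eq_of_pow_le_of_lt_pow h₁ h₂, Nat.log_eq_of_pow_le_of_lt_pow hj hj₂]

theorem F_inter_Ico_pow {k N : ℕ} (hN : N ≤ 4 ^ (k + 1)) :
    F ∩ Set.Ico (4 ^ k) N = Set.Ico (3 * 4 ^ k) N := by
  have h4 : 4 ^ k ≤ 3 * 4 ^ k := Nat.le_mul_of_pos_left _ (by norm_num)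
  ext n
  simp only [Set.mem_inter_iff, Set.mem_Ico]
  constructor
  · rintro ⟨hF, hk, hn⟩
    exact ⟨three_mul_pow_le_of_mem_F hF hk (by omega), hn⟩
  · rintro ⟨hk, hn⟩
    exact ⟨⟨k, hk, by omega⟩, by omega, hn⟩

theorem ncard_F_Iio_of_pow_le {k N : ℕ} (hk : 4 ^ k ≤ N) (hN : N ≤ 4 ^ (k + 1)) :
    (F ∩ Set.Iio N).ncard = (F ∩ Set.Iio (4 ^ k)).ncard + (N - 3 * 4 ^ k) := by
  rw [Set.ncard_inter_Iio_eq_add hk, F_inter_Ico_pow hN, Set.ncard_Ico_nat]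

theorem three_mul_ncard_F_Iio_pow_add_one (k : ℕ) :
    3 * (F ∩ Set.Iio (4 ^ k)).ncard + 1 = 4 ^ k := by
  induction k with
  | zero =>
    have h0 : F ∩ Set.Iio 1 = ∅ :=
      Set.eq_empty_of_forall_notMem fun n ⟨⟨j, hj, _⟩, hn⟩ => by
        have : 0 < 4 ^ j := by positivity
        simp only [Set.mem_Iio] at hn
        omega
    simp only [pow_zero, h0, Set.ncard_empty, mul_zero, zero_add]
  | succ k ih =>
    have h4 : 4 ^ (k + 1) = 4 * 4 ^ k := by ring
    rw [ncard_F_Iio_of_pow_le (k := k) (by omega) le_rfl]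
    omega

theorem three_mul_ncard_F_Iio_le (N : ℕ) : 3 * (F ∩ Set.Iio N).ncard ≤ N := by
  rcases Nat.eq_zero_or_pos N with rfl | hN
  · simp
  set k := Nat.log 4 N
  have hk : 4 ^ k ≤ N := Nat.pow_log_le_self 4 hN.ne'
  have hN' : N < 4 ^ (k + 1) := Nat.lt_pow_succ_log_self (by norm_num) N
  have h4 : 4 ^ (k + 1) = 4 * 4 ^ k := by ring
  have := three_mul_ncard_F_Iio_pow_add_one k
  rw [ncard_F_Iio_of_pow_le hk hN'.le]
  omega

theorem density_F_pow (k : ℕ) :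
    ((F ∩ Set.Iio (4 ^ k)).ncard : ℝ) / (4 ^ k : ℕ) = 1 / 3 - (1 / 4) ^ k / 3 := by
  have h : 3 * ((F ∩ Set.Iio (4 ^ k)).ncard : ℝ) + 1 = 4 ^ k := by
    exact_mod_cast three_mul_ncard_F_Iio_pow_add_one k
  rw [div_pow, one_pow]
  push_cast
  field_simp
  linarith

theorem density_F_le (N : ℕ) : ((F ∩ Set.Iio N).ncard : ℝ) / N ≤ 1 / 3 := by
  rcases Nat.eq_zero_or_pos N with rfl | hN
  · simp
  have h : (3 * (F ∩ Set.Iio N).ncard : ℝ) ≤ N := by exact_mod_cast three_mul_ncard_F_Iio_le N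
  rw [div_le_iff₀ (by exact_mod_cast hN)]
  linarith

theorem stmt_6 :
    Filter.limsup (fun N : ℕ => ((F ∩ Set.Iio N).ncard : ℝ) / N) Filter.atTop = 1 / 3 := by
  apply limsup_eq_of_eventually_le_of_mapClusterPt (Eventually.of_forall density_F_le)
  have hpow : Tendsto (fun k : ℕ => 4 ^ k) atTop atTop :=
    tendsto_pow_atTop_atTop_of_one_lt (by norm_num)
  have hlim : Tendsto (fun k : ℕ => 1 / 3 - (1 / 4 : ℝ) ^ k / 3) atTop (𝓝 (1 / 3)) := by
    have hgeom : Tendsto (fun k : ℕ => (1 / 4 : ℝ) ^ k) atTop (𝓝 0) :=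
      tendsto_pow_atTop_nhds_zero_of_lt_one (by norm_num) (by norm_num)
    simpa using (hgeom.div_const 3).const_sub (1 / 3 : ℝ)
  exact MapClusterPt.of_comp hpow (hlim.congr fun k => (density_F_pow k).symm).mapClusterPt
end

section
/- Suppose d : ℕ → ℤ satisfies d(n) ≥ 4·d(⌊n/4⌋) − 18 for all n, and d(n) > n/5 + 7 for 87 ≤ n < 348, and d(n) > 0 for 0 ≤ n < 87. Then d(n) > 0 for all n ∈ ℕ. -/
theorem stmt_12 (d : ℕ → ℤ)
    (hrec : ∀ n : ℕ, d n ≥ 4 * d (n / 4) - 18)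
    (hmid : ∀ n : ℕ, 87 ≤ n → n < 348 → (d n : ℚ) > n / 5 + 7)
    (hbase : ∀ n : ℕ, n < 87 → 0 < d n) :
    ∀ n : ℕ, 0 < d n := by
  have key : ∀ n : ℕ, 87 ≤ n → (d n : ℚ) > n / 5 + 7 := by
    intro n
    induction n using Nat.strong_induction_on with
    | _ n ih =>
      intro hn
      by_cases h : n < 348
      · exact hmid n hn h
      · push_neg at h
        have hq : 87 ≤ n / 4 := by omega
        have hlt : n / 4 < n := Nat.div_lt_self (by omega) (by norm_num)
        have ihq := ih (n / 4) hlt hq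
        have hr := hrec n
        have hcast : (d n : ℚ) ≥ 4 * (d (n / 4) : ℚ) - 18 := by
          exact_mod_cast hr
        have hmod : n % 4 < 4 := Nat.mod_lt _ (by norm_num)
        have hdiv : 4 * (n / 4) + n % 4 = n := by omega
        have hnq : 4 * ((n / 4 : ℕ) : ℚ) ≥ (n : ℚ) - 3 := by
          have : (n : ℚ) = 4 * ((n / 4 : ℕ) : ℚ) + ((n % 4 : ℕ) : ℚ) := by
            exact_mod_cast (hdiv.symm)
          have h3 : ((n % 4 : ℕ) : ℚ) ≤ 3 := by exact_mod_cast Nat.le_of_lt_succ hmod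
          linarith
        linarith
  intro n
  by_cases h : n < 87
  · exact hbase n h
  · push_neg at h
    have hk := key n h
    have h7 : ((n : ℚ)) / 5 + 7 > 0 := by positivity
    have : (0 : ℚ) < (d n : ℚ) := by linarith
    exact_mod_cast this
end

section
/- The sequence (r(3, A, n))_{n≥0} is strictly increasing, where A = ℕ \ F and F = {n : ∃k ≥ 0, 3·4^k ≤ n < 4^{k+1}}. -/
open Filter Topology

noncomputable def r3 (X : Set ℕ) (n : ℕ) : ℕ :=
  {p : ℕ × ℕ × ℕ | p.1 ∈ X ∧ p.2.1 ∈ X ∧ p.2.2 ∈ X ∧ p.1 + p.2.1 + p.2.2 = n}.ncard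

def A : Set ℕ := Set.univ \ F

open Finset

def aaF : ℕ → ℕ → ℕ
  | 0, n => if n = 3 then 0 else 1
  | fuel+1, n => if n < 4 then (if n = 3 then 0 else 1) else aaF fuel (n / 4)

def aa (n : ℕ) : ℕ := aaF n n

lemma aaF_congr : ∀ n f1 f2, n ≤ f1 → n ≤ f2 → aaF f1 n = aaF f2 n := by
  intro n
  induction n using Nat.strong_induction_on with
  | _ n ih =>
    intro f1 f2 h1 h2
    rcases Nat.lt_or_ge n 4 with h | h
    · cases f1 <;> cases f2 <;> simp [aaF, h] <;> omega
    · obtain ⟨g1, rfl⟩ : ∃ g, f1 = g + 1 := ⟨f1 - 1, by omega⟩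
      obtain ⟨g2, rfl⟩ : ∃ g, f2 = g + 1 := ⟨f2 - 1, by omega⟩
      simp only [aaF, if_neg (by omega : ¬ n < 4)]
      exact ih (n / 4) (by omega) g1 g2 (by omega) (by omega)

lemma aa_div4 {n : ℕ} (h : 4 ≤ n) : aa n = aa (n / 4) := by
  obtain ⟨g, rfl⟩ : ∃ g, n = g + 1 := ⟨n - 1, by omega⟩
  show aaF (g+1) (g+1) = _
  rw [aaF, if_neg (by omega)]
  exact aaF_congr _ _ _ (by omega) (by omega)

lemma aa_lt4 {n : ℕ} (h : n < 4) : aa n = if n = 3 then 0 else 1 := by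
  interval_cases n <;> decide

lemma aa_le_one (n : ℕ) : aa n ≤ 1 := by
  induction n using Nat.strong_induction_on with
  | _ n ih =>
    rcases Nat.lt_or_ge n 4 with h | h
    · rw [aa_lt4 h]; split <;> omega
    · rw [aa_div4 h]; exact ih _ (by omega)

lemma mem_F_iff (n : ℕ) : n ∈ F ↔ aa n = 0 := by
  induction n using Nat.strong_induction_on with
  | _ n ih =>
    rcases Nat.lt_or_ge n 4 with h | h
    · rw [aa_lt4 h]
      constructor
      · rintro ⟨k, h1, h2⟩
        have : k = 0 := by
          by_contra hk
          have : 4 ≤ 4 ^ k := by calc 4 = 4^1 := rfl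
            _ ≤ 4 ^ k := Nat.pow_le_pow_right (by norm_num) (by omega)
          omega
        subst this; simp at h1 h2 ⊢; omega
      · intro hn
        have : n = 3 := by by_contra h3; simp [h3] at hn
        exact ⟨0, by omega, by omega⟩
    · rw [aa_div4 h, ← ih (n/4) (by omega)]
      constructor
      · rintro ⟨k, h1, h2⟩
        have hk : k ≠ 0 := by
          by_contra hk; subst hk; simp at h1 h2; omega
        obtain ⟨j, rfl⟩ : ∃ j, k = j + 1 := ⟨k - 1, by omega⟩
        refine ⟨j, ?_, ?_⟩
        · have : 3 * 4 ^ (j+1) = 4 * (3 * 4 ^ j) := by ring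
          omega
        · have : 4 ^ (j + 1 + 1) = 4 * 4 ^ (j+1) := by ring
          omega
      · rintro ⟨k, h1, h2⟩
        refine ⟨k + 1, ?_, ?_⟩
        · have : 3 * 4 ^ (k+1) = 4 * (3 * 4 ^ k) := by ring
          have := Nat.div_mul_le_self n 4
          omega
        · have : 4 ^ (k + 1 + 1) = 4 * 4 ^ (k+1) := by ring
          have : n < (n / 4 + 1) * 4 := by omega
          omega

lemma mem_A_iff (n : ℕ) : n ∈ A ↔ aa n = 1 := by
  have := aa_le_one n
  have := mem_F_iff n
  simp only [A, Set.mem_diff, Set.mem_univ, true_and, this]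
  omega

open Finset in
def Q2 (n : ℕ) : ℕ := ∑ i ∈ range (n+1), aa i * aa (n - i)
open Finset in
def Q3 (n : ℕ) : ℕ := ∑ i ∈ range (n+1), aa i * Q2 (n - i)

open Finset in
lemma r3_eq (n : ℕ) : r3 A n = Q3 n := by
  classical
  -- the set of triples equals the image of a pair-set
  set T2 : Finset (ℕ × ℕ) := (range (n+1) ×ˢ range (n+1)).filter
      (fun q => q.1 + q.2 ≤ n ∧ aa q.1 = 1 ∧ aa q.2 = 1 ∧ aa (n - q.1 - q.2) = 1) with hT2
  have hset : {p : ℕ × ℕ × ℕ | p.1 ∈ A ∧ p.2.1 ∈ A ∧ p.2.2 ∈ A ∧ p.1 + p.2.1 + p.2.2 = n}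
      = (fun q : ℕ × ℕ => (q.1, q.2, n - q.1 - q.2)) '' ↑T2 := by
    ext ⟨i, j, k⟩
    simp only [Set.mem_setOf_eq, Set.mem_image, Finset.coe_filter, Set.mem_setOf_eq,
      mem_product, mem_range, mem_A_iff, hT2, Finset.mem_coe, Finset.mem_filter]
    constructor
    · rintro ⟨h1, h2, h3, h4⟩
      exact ⟨(i, j), ⟨⟨by omega, by omega⟩, by omega, h1, h2, by
        simpa [show n - i - j = k by omega] using h3⟩, by simp; omega⟩
    · rintro ⟨⟨a, b⟩, ⟨⟨hb1, hb2⟩, hle, ha, hb', hc⟩, heq⟩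
      obtain ⟨rfl, rfl, rfl⟩ : a = i ∧ b = j ∧ n - a - b = k := by
        simpa [Prod.ext_iff] using heq
      exact ⟨ha, hb', hc, by omega⟩
  have hinj : Function.Injective (fun q : ℕ × ℕ => (q.1, q.2, n - q.1 - q.2)) := by
    rintro ⟨a, b⟩ ⟨c, d⟩ h
    simp only [Prod.ext_iff] at h
    exact Prod.ext h.1 h.2.1
  rw [r3, hset, Set.ncard_image_of_injective _ hinj, Set.ncard_coe_finset]
  -- now count T2
  rw [Finset.card_filter]
  rw [Finset.sum_product]
  unfold Q3
  apply Finset.sum_congr rfl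
  intro i hi
  simp only [mem_range] at hi
  have hii : aa i ≤ 1 := aa_le_one i
  by_cases hai : aa i = 1
  · rw [hai, one_mul]
    have hsub : range (n - i + 1) ⊆ range (n + 1) := by
      apply Finset.range_subset_range.2; omega
    rw [Q2, ← Finset.sum_subset hsub (by
      intro j hj hj2
      simp only [mem_range] at hj hj2
      rw [if_neg]; rintro ⟨h1, -⟩; omega)]
    apply Finset.sum_congr rfl
    intro j hj
    simp only [mem_range] at hj
    have h1 : aa j ≤ 1 := aa_le_one j
    have h2 : aa (n - i - j) ≤ 1 := aa_le_one _
    by_cases hj1 : aa j = 1 <;> by_cases hk1 : aa (n - i - j) = 1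
    · rw [if_pos ⟨by omega, hai, hj1, hk1⟩, hj1, hk1]
    · rw [if_neg (by tauto), show aa (n - i - j) = 0 by omega, mul_zero]
    · rw [if_neg (by tauto), show aa j = 0 by omega, zero_mul]
    · rw [if_neg (by tauto), show aa j = 0 by omega, zero_mul]
  · have : aa i = 0 := by omega
    rw [this, zero_mul]
    apply Finset.sum_eq_zero
    intro j hj
    rw [if_neg]; rintro ⟨-, h2, -⟩; simp only [] at h2; omega

def cv (g h : ℕ → ℤ) (n : ℕ) : ℤ := ∑ i ∈ range (n+1), g i * h (n - i)
def sp (w C : ℕ → ℤ) (n : ℕ) : ℤ := ∑ M ∈ range (n/4+1), w (n - 4*M) * C M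

lemma cv_spread (w v C D : ℕ → ℤ) (n : ℕ) :
    cv (sp w C) (sp v D) n = sp (cv w v) (cv C D) n := by
  unfold cv sp
  simp only [sum_mul, mul_sum]
  rw [Finset.sum_sigma', Finset.sum_sigma']
  conv_rhs => rw [Finset.sum_sigma', Finset.sum_sigma']
  refine Finset.sum_nbij' (fun x => ⟨⟨x.snd + x.fst.snd, x.snd⟩, x.fst.fst - 4 * x.snd⟩)
    (fun y => ⟨⟨y.snd + 4 * y.fst.snd, y.fst.fst - y.fst.snd⟩, y.fst.snd⟩) ?_ ?_ ?_ ?_ ?_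
  · rintro ⟨⟨i, Q⟩, P⟩ hm
    simp only [mem_sigma, mem_range] at hm ⊢
    omega
  · rintro ⟨⟨M, P'⟩, c⟩ hm
    simp only [mem_sigma, mem_range] at hm ⊢
    omega
  · rintro ⟨⟨i, Q⟩, P⟩ hm
    simp only [mem_sigma, mem_range] at hm
    simp only [Sigma.mk.inj_iff, heq_eq_eq, and_true, true_and]
    omega
  · rintro ⟨⟨M, P'⟩, c⟩ hm
    simp only [mem_sigma, mem_range] at hm
    simp only [Sigma.mk.inj_iff, heq_eq_eq, and_true, true_and]
    omega
  · rintro ⟨⟨i, Q⟩, P⟩ hm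
    simp only [mem_sigma, mem_range] at hm
    have e1 : n - 4 * (P + Q) - (i - 4 * P) = n - i - 4 * Q := by omega
    have e2 : P + Q - P = Q := by omega
    simp only [e1, e2]
    ring

def az (n : ℕ) : ℤ := aa n
def w4 (c : ℕ) : ℤ := if c < 4 then 1 else 0
def d3 (n : ℕ) : ℤ := if n = 3 then 1 else 0
def sh3 (h : ℕ → ℤ) (n : ℕ) : ℤ := if 3 ≤ n then h (n - 3) else 0

lemma cv_comm (g h : ℕ → ℤ) (n : ℕ) : cv g h n = cv h g n := by
  unfold cv
  rw [← Finset.sum_range_reflect]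
  apply Finset.sum_congr rfl
  intro i hi
  simp only [mem_range] at hi
  rw [show n - (n + 1 - 1 - i) = i by omega, show n + 1 - 1 - i = n - i by omega]
  ring

lemma cv_d3 (h : ℕ → ℤ) (n : ℕ) : cv d3 h n = sh3 h n := by
  unfold cv sh3
  rcases Nat.lt_or_ge n 3 with hn | hn
  · rw [if_neg (by omega)]
    apply Finset.sum_eq_zero
    intro i hi
    simp only [mem_range] at hi
    rw [d3, if_neg (by omega), zero_mul]
  · rw [if_pos hn]
    rw [Finset.sum_eq_single 3]
    · rw [d3, if_pos rfl, one_mul]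
    · intro i _ hi3
      rw [d3, if_neg hi3, zero_mul]
    · intro hc
      simp only [mem_range] at hc
      omega

lemma cv_sh3 (g h : ℕ → ℤ) (n : ℕ) : cv g (sh3 h) n = sh3 (cv g h) n := by
  simp only [cv, sh3]
  rcases Nat.lt_or_ge n 3 with hn | hn
  · rw [if_neg (by omega)]
    apply Finset.sum_eq_zero
    intro i hi
    simp only [mem_range] at hi
    rw [if_neg (by omega), mul_zero]
  · rw [if_pos hn]
    have hsub : range (n - 3 + 1) ⊆ range (n + 1) := Finset.range_subset_range.2 (by omega)
    rw [← Finset.sum_subset hsub (by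
      intro i hi hi2
      simp only [mem_range] at hi hi2
      rw [if_neg (by omega), mul_zero])]
    apply Finset.sum_congr rfl
    intro i hi
    simp only [mem_range] at hi
    rw [if_pos (by omega), show n - i - 3 = n - 3 - i by omega]

lemma sp_w4 (g : ℕ → ℤ) (n : ℕ) : sp w4 g n = g (n / 4) := by
  unfold sp
  rw [Finset.sum_eq_single (n / 4)]
  · rw [w4, if_pos (by omega), one_mul]
  · intro M hM hne
    simp only [mem_range] at hM
    rw [w4, if_neg (by omega), zero_mul]
  · intro hc
    simp only [mem_range] at hc
    omega

lemma az_eq (n : ℕ) : az n = sp w4 az n - d3 n := by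
  rw [sp_w4]
  unfold az d3
  rcases Nat.lt_or_ge n 4 with h | h
  · interval_cases n <;> decide
  · rw [← aa_div4 h, if_neg (by omega)]
    ring

lemma cv_congr_left (g g' h : ℕ → ℤ) (n : ℕ) (hg : ∀ m, g m = g' m) :
    cv g h n = cv g' h n := by
  unfold cv; exact Finset.sum_congr rfl fun i _ => by rw [hg]

lemma cv_congr_right (g h h' : ℕ → ℤ) (n : ℕ) (hh : ∀ m, h m = h' m) :
    cv g h n = cv g h' n := by
  unfold cv; exact Finset.sum_congr rfl fun i _ => by rw [hh]

lemma cv_sub_left (g1 g2 h : ℕ → ℤ) (n : ℕ) :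
    cv (fun m => g1 m - g2 m) h n = cv g1 h n - cv g2 h n := by
  unfold cv
  rw [← Finset.sum_sub_distrib]
  exact Finset.sum_congr rfl fun i _ => by ring

lemma cv_sub_right (g h1 h2 : ℕ → ℤ) (n : ℕ) :
    cv g (fun m => h1 m - h2 m) n = cv g h1 n - cv g h2 n := by
  unfold cv
  rw [← Finset.sum_sub_distrib]
  exact Finset.sum_congr rfl fun i _ => by ring

lemma cv_lin_right (g h1 h2 h3 : ℕ → ℤ) (n : ℕ) :
    cv g (fun m => h1 m - 2 * h2 m + h3 m) n
      = cv g h1 n - 2 * cv g h2 n + cv g h3 n := by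
  unfold cv
  rw [Finset.mul_sum, ← Finset.sum_sub_distrib, ← Finset.sum_add_distrib]
  exact Finset.sum_congr rfl fun i _ => by ring

lemma sh3_lin (h1 h2 h3 : ℕ → ℤ) (n : ℕ) :
    sh3 (fun m => h1 m - 2 * h2 m + h3 m) n = sh3 h1 n - 2 * sh3 h2 n + sh3 h3 n := by
  unfold sh3; split <;> ring

lemma sh3_congr (h h' : ℕ → ℤ) (n : ℕ) (hh : ∀ m, h m = h' m) : sh3 h n = sh3 h' n := by
  unfold sh3; split <;> simp [hh]

lemma I2 (n : ℕ) : cv az az n =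
    sp (cv w4 w4) (cv az az) n - 2 * sh3 (sp w4 az) n + sh3 d3 n := by
  rw [cv_congr_left az (fun m => sp w4 az m - d3 m) az n az_eq,
    cv_congr_right _ az (fun m => sp w4 az m - d3 m) n az_eq,
    cv_sub_left, cv_sub_right, cv_sub_right, cv_spread,
    cv_comm (sp w4 az) d3, cv_d3, cv_d3]
  ring

lemma I3 (n : ℕ) : cv az (cv az az) n =
    sp (cv w4 (cv w4 w4)) (cv az (cv az az)) n - 3 * sh3 (sp (cv w4 w4) (cv az az)) n
      + 3 * sh3 (sh3 (sp w4 az)) n - sh3 (sh3 d3) n := by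
  rw [cv_congr_right az (cv az az)
      (fun m => sp (cv w4 w4) (cv az az) m - 2 * sh3 (sp w4 az) m + sh3 d3 m) n I2,
    cv_congr_left az (fun m => sp w4 az m - d3 m) _ n az_eq,
    cv_sub_left, cv_lin_right, cv_lin_right, cv_spread, cv_sh3, cv_sh3,
    cv_d3, cv_d3, cv_d3,
    sh3_congr (cv (sp w4 az) (sp w4 az)) (sp (cv w4 w4) (cv az az)) n (cv_spread w4 w4 az az),
    sh3_congr (cv (sp w4 az) d3) (sh3 (sp w4 az)) n
      (fun m => by rw [cv_comm, cv_d3])]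
  ring

lemma U2_zero {c : ℕ} (hc : 7 ≤ c) : cv w4 w4 c = 0 := by
  apply Finset.sum_eq_zero
  intro i hi
  simp only [mem_range] at hi
  rcases Nat.lt_or_ge i 4 with h | h
  · have h2 : w4 (c - i) = 0 := by rw [w4, if_neg (by omega)]
    rw [h2, mul_zero]
  · have h2 : w4 i = 0 := by rw [w4, if_neg (by omega)]
    rw [h2, zero_mul]

lemma U3_zero {c : ℕ} (hc : 10 ≤ c) : cv w4 (cv w4 w4) c = 0 := by
  apply Finset.sum_eq_zero
  intro i hi
  simp only [mem_range] at hi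
  rcases Nat.lt_or_ge i 4 with h | h
  · have h2 : cv w4 w4 (c - i) = 0 := U2_zero (by omega)
    rw [h2, mul_zero]
  · have h2 : w4 i = 0 := by rw [w4, if_neg (by omega)]
    rw [h2, zero_mul]

lemma sp_eval (W C : ℕ → ℤ) (hW : ∀ c, 10 ≤ c → W c = 0) (n m t : ℕ)
    (hm : 2 ≤ m) (ht : t < 4) (hn : n = 4*m + t) :
    sp W C n = W t * C m + W (t+4) * C (m-1) + W (t+8) * C (m-2) := by
  subst hn
  unfold sp
  rw [show (4*m+t)/4 + 1 = (m - 2) + 3 by omega]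
  rw [Finset.sum_range_succ, Finset.sum_range_succ, Finset.sum_range_succ]
  rw [show m - 2 + 2 = m by omega, show m - 2 + 1 = m - 1 by omega]
  rw [show 4*m + t - 4*m = t by omega, show 4*m + t - 4*(m-1) = t + 4 by omega,
    show 4*m + t - 4*(m-2) = t + 8 by omega]
  rw [Finset.sum_eq_zero (fun M hM => by
    simp only [mem_range] at hM
    rw [hW _ (by omega), zero_mul])]
  ring

lemma sh3_spw4 (n : ℕ) (h : 3 ≤ n) : sh3 (sp w4 az) n = az ((n-3)/4) := by
  rw [sh3, if_pos h, sp_w4]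

lemma sh3_sh3_spw4 (n : ℕ) (h : 6 ≤ n) : sh3 (sh3 (sp w4 az)) n = az ((n-6)/4) := by
  rw [sh3, if_pos (by omega), sh3, if_pos (by omega), sp_w4, show n - 3 - 3 = n - 6 by omega]

lemma sh3_d3_zero (n : ℕ) (h : n ≠ 6) : sh3 d3 n = 0 := by
  rw [sh3]; split
  · rw [d3, if_neg (by omega)]
  · rfl

lemma sh3_sh3_d3_zero (n : ℕ) (h : n ≠ 9) : sh3 (sh3 d3) n = 0 := by
  rw [sh3]; split
  · exact sh3_d3_zero _ (by omega)
  · rfl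

-- U-values
lemma U2v : cv w4 w4 0 = 1 ∧ cv w4 w4 1 = 2 ∧ cv w4 w4 2 = 3 ∧ cv w4 w4 3 = 4 ∧
    cv w4 w4 4 = 3 ∧ cv w4 w4 5 = 2 ∧ cv w4 w4 6 = 1 ∧ cv w4 w4 7 = 0 ∧
    cv w4 w4 8 = 0 ∧ cv w4 w4 9 = 0 ∧ cv w4 w4 10 = 0 ∧ cv w4 w4 11 = 0 := by
  refine ⟨?_,?_,?_,?_,?_,?_,?_,?_,?_,?_,?_,?_⟩ <;> decide

lemma U3v : cv w4 (cv w4 w4) 0 = 1 ∧ cv w4 (cv w4 w4) 1 = 3 ∧ cv w4 (cv w4 w4) 2 = 6 ∧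
    cv w4 (cv w4 w4) 3 = 10 ∧ cv w4 (cv w4 w4) 4 = 12 ∧ cv w4 (cv w4 w4) 5 = 12 ∧
    cv w4 (cv w4 w4) 6 = 10 ∧ cv w4 (cv w4 w4) 7 = 6 ∧ cv w4 (cv w4 w4) 8 = 3 ∧
    cv w4 (cv w4 w4) 9 = 1 ∧ cv w4 (cv w4 w4) 10 = 0 ∧ cv w4 (cv w4 w4) 11 = 0 := by
  refine ⟨?_,?_,?_,?_,?_,?_,?_,?_,?_,?_,?_,?_⟩ <;> decide

lemma sh3_eval (h : ℕ → ℤ) (n : ℕ) (hn : 3 ≤ n) : sh3 h n = h (n-3) := by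
  rw [sh3, if_pos hn]

lemma E0 (m : ℕ) (hm : 3 ≤ m) :
    cv az az (4*m) - cv az az (4*m-1) = cv az az m - cv az az (m-1) := by
  obtain ⟨u0,u1,u2,u3,u4,u5,u6,u7,u8,u9,u10,u11⟩ := U2v
  rw [I2 (4*m), I2 (4*m-1),
    sp_eval _ _ (fun c hc => U2_zero (by omega)) (4*m) m 0 (by omega) (by omega) (by omega),
    sp_eval _ _ (fun c hc => U2_zero (by omega)) (4*m-1) (m-1) 3 (by omega) (by omega) (by omega),
    sh3_spw4 (4*m) (by omega), sh3_spw4 (4*m-1) (by omega),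
    show (4*m-3)/4 = m-1 by omega, show (4*m-1-3)/4 = m-1 by omega,
    sh3_d3_zero (4*m) (by omega), sh3_d3_zero (4*m-1) (by omega),
    show m-1-1 = m-2 by omega, show m-1-2 = m-3 by omega,
    u0, u3, u4, u7, u8, u11]
  ring

lemma E1 (m : ℕ) (hm : 3 ≤ m) :
    cv az az (4*m+1) - cv az az (4*m) = cv az az m - cv az az (m-1) := by
  obtain ⟨u0,u1,u2,u3,u4,u5,u6,u7,u8,u9,u10,u11⟩ := U2v
  rw [I2 (4*m+1), I2 (4*m),
    sp_eval _ _ (fun c hc => U2_zero (by omega)) (4*m+1) m 1 (by omega) (by omega) (by omega),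
    sp_eval _ _ (fun c hc => U2_zero (by omega)) (4*m) m 0 (by omega) (by omega) (by omega),
    sh3_spw4 (4*m+1) (by omega), sh3_spw4 (4*m) (by omega),
    show (4*m+1-3)/4 = m-1 by omega, show (4*m-3)/4 = m-1 by omega,
    sh3_d3_zero (4*m+1) (by omega), sh3_d3_zero (4*m) (by omega),
    u0, u1, u4, u5, u8, u9]
  ring

lemma E2 (m : ℕ) (hm : 3 ≤ m) :
    cv az az (4*m+2) - cv az az (4*m+1) = cv az az m - cv az az (m-1) := by
  obtain ⟨u0,u1,u2,u3,u4,u5,u6,u7,u8,u9,u10,u11⟩ := U2v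
  rw [I2 (4*m+2), I2 (4*m+1),
    sp_eval _ _ (fun c hc => U2_zero (by omega)) (4*m+2) m 2 (by omega) (by omega) (by omega),
    sp_eval _ _ (fun c hc => U2_zero (by omega)) (4*m+1) m 1 (by omega) (by omega) (by omega),
    sh3_spw4 (4*m+2) (by omega), sh3_spw4 (4*m+1) (by omega),
    show (4*m+2-3)/4 = m-1 by omega, show (4*m+1-3)/4 = m-1 by omega,
    sh3_d3_zero (4*m+2) (by omega), sh3_d3_zero (4*m+1) (by omega),
    u1, u2, u5, u6, u9, u10]
  ring

lemma E3 (m : ℕ) (hm : 3 ≤ m) :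
    cv az az (4*m+3) - cv az az (4*m+2)
      = cv az az m - cv az az (m-1) - 2 * (az m - az (m-1)) := by
  obtain ⟨u0,u1,u2,u3,u4,u5,u6,u7,u8,u9,u10,u11⟩ := U2v
  rw [I2 (4*m+3), I2 (4*m+2),
    sp_eval _ _ (fun c hc => U2_zero (by omega)) (4*m+3) m 3 (by omega) (by omega) (by omega),
    sp_eval _ _ (fun c hc => U2_zero (by omega)) (4*m+2) m 2 (by omega) (by omega) (by omega),
    sh3_spw4 (4*m+3) (by omega), sh3_spw4 (4*m+2) (by omega),
    show (4*m+3-3)/4 = m by omega, show (4*m+2-3)/4 = m-1 by omega,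
    sh3_d3_zero (4*m+3) (by omega), sh3_d3_zero (4*m+2) (by omega),
    u2, u3, u6, u7, u10, u11]
  ring

lemma D0 (m : ℕ) (hm : 3 ≤ m) :
    cv az (cv az az) (4*m) - cv az (cv az az) (4*m-1)
      = (cv az (cv az az) m - cv az (cv az az) (m-1))
        + 3 * (cv az (cv az az) (m-1) - cv az (cv az az) (m-2))
        - 3 * (cv az az (m-1) - cv az az (m-2)) := by
  obtain ⟨u0,u1,u2,u3,u4,u5,u6,u7,u8,u9,u10,u11⟩ := U2v
  obtain ⟨v0,v1,v2,v3,v4,v5,v6,v7,v8,v9,v10,v11⟩ := U3v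
  rw [I3 (4*m), I3 (4*m-1),
    sp_eval _ _ (fun c hc => U3_zero (by omega)) (4*m) m 0 (by omega) (by omega) (by omega),
    sp_eval _ _ (fun c hc => U3_zero (by omega)) (4*m-1) (m-1) 3 (by omega) (by omega) (by omega),
    sh3_eval (sp (cv w4 w4) (cv az az)) (4*m) (by omega),
    sh3_eval (sp (cv w4 w4) (cv az az)) (4*m-1) (by omega),
    sp_eval _ _ (fun c hc => U2_zero (by omega)) (4*m-3) (m-1) 1 (by omega) (by omega) (by omega),
    sp_eval _ _ (fun c hc => U2_zero (by omega)) (4*m-1-3) (m-1) 0 (by omega) (by omega) (by omega),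
    sh3_sh3_spw4 (4*m) (by omega), sh3_sh3_spw4 (4*m-1) (by omega),
    show (4*m-6)/4 = m-2 by omega, show (4*m-1-6)/4 = m-2 by omega,
    sh3_sh3_d3_zero (4*m) (by omega), sh3_sh3_d3_zero (4*m-1) (by omega),
    show m-1-1 = m-2 by omega, show m-1-2 = m-3 by omega,
    u0, u1, u4, u5, u8, u9, v0, v3, v4, v7, v8, v11]
  ring

lemma D1 (m : ℕ) (hm : 3 ≤ m) :
    cv az (cv az az) (4*m+1) - cv az (cv az az) (4*m)
      = 2 * (cv az (cv az az) m - cv az (cv az az) (m-1))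
        + 2 * (cv az (cv az az) (m-1) - cv az (cv az az) (m-2))
        - 3 * (cv az az (m-1) - cv az az (m-2)) := by
  obtain ⟨u0,u1,u2,u3,u4,u5,u6,u7,u8,u9,u10,u11⟩ := U2v
  obtain ⟨v0,v1,v2,v3,v4,v5,v6,v7,v8,v9,v10,v11⟩ := U3v
  rw [I3 (4*m+1), I3 (4*m),
    sp_eval _ _ (fun c hc => U3_zero (by omega)) (4*m+1) m 1 (by omega) (by omega) (by omega),
    sp_eval _ _ (fun c hc => U3_zero (by omega)) (4*m) m 0 (by omega) (by omega) (by omega),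
    sh3_eval (sp (cv w4 w4) (cv az az)) (4*m+1) (by omega),
    sh3_eval (sp (cv w4 w4) (cv az az)) (4*m) (by omega),
    sp_eval _ _ (fun c hc => U2_zero (by omega)) (4*m+1-3) (m-1) 2 (by omega) (by omega) (by omega),
    sp_eval _ _ (fun c hc => U2_zero (by omega)) (4*m-3) (m-1) 1 (by omega) (by omega) (by omega),
    sh3_sh3_spw4 (4*m+1) (by omega), sh3_sh3_spw4 (4*m) (by omega),
    show (4*m+1-6)/4 = m-2 by omega, show (4*m-6)/4 = m-2 by omega,
    sh3_sh3_d3_zero (4*m+1) (by omega), sh3_sh3_d3_zero (4*m) (by omega),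
    show m-1-1 = m-2 by omega, show m-1-2 = m-3 by omega,
    u1, u2, u5, u6, u9, u10, v0, v1, v4, v5, v8, v9]
  ring

lemma D2 (m : ℕ) (hm : 3 ≤ m) :
    cv az (cv az az) (4*m+2) - cv az (cv az az) (4*m+1)
      = 3 * (cv az (cv az az) m - cv az (cv az az) (m-1))
        + (cv az (cv az az) (m-1) - cv az (cv az az) (m-2))
        - 3 * (cv az az (m-1) - cv az az (m-2))
        + 3 * (az (m-1) - az (m-2)) := by
  obtain ⟨u0,u1,u2,u3,u4,u5,u6,u7,u8,u9,u10,u11⟩ := U2v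
  obtain ⟨v0,v1,v2,v3,v4,v5,v6,v7,v8,v9,v10,v11⟩ := U3v
  rw [I3 (4*m+2), I3 (4*m+1),
    sp_eval _ _ (fun c hc => U3_zero (by omega)) (4*m+2) m 2 (by omega) (by omega) (by omega),
    sp_eval _ _ (fun c hc => U3_zero (by omega)) (4*m+1) m 1 (by omega) (by omega) (by omega),
    sh3_eval (sp (cv w4 w4) (cv az az)) (4*m+2) (by omega),
    sh3_eval (sp (cv w4 w4) (cv az az)) (4*m+1) (by omega),
    sp_eval _ _ (fun c hc => U2_zero (by omega)) (4*m+2-3) (m-1) 3 (by omega) (by omega) (by omega),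
    sp_eval _ _ (fun c hc => U2_zero (by omega)) (4*m+1-3) (m-1) 2 (by omega) (by omega) (by omega),
    sh3_sh3_spw4 (4*m+2) (by omega), sh3_sh3_spw4 (4*m+1) (by omega),
    show (4*m+2-6)/4 = m-1 by omega, show (4*m+1-6)/4 = m-2 by omega,
    sh3_sh3_d3_zero (4*m+2) (by omega), sh3_sh3_d3_zero (4*m+1) (by omega),
    show m-1-1 = m-2 by omega, show m-1-2 = m-3 by omega,
    u2, u3, u6, u7, u10, u11, v1, v2, v5, v6, v9, v10]
  ring

lemma D3 (m : ℕ) (hm : 3 ≤ m) :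
    cv az (cv az az) (4*m+3) - cv az (cv az az) (4*m+2)
      = 4 * (cv az (cv az az) m - cv az (cv az az) (m-1))
        - 3 * (cv az az m - cv az az (m-1)) := by
  obtain ⟨u0,u1,u2,u3,u4,u5,u6,u7,u8,u9,u10,u11⟩ := U2v
  obtain ⟨v0,v1,v2,v3,v4,v5,v6,v7,v8,v9,v10,v11⟩ := U3v
  rw [I3 (4*m+3), I3 (4*m+2),
    sp_eval _ _ (fun c hc => U3_zero (by omega)) (4*m+3) m 3 (by omega) (by omega) (by omega),
    sp_eval _ _ (fun c hc => U3_zero (by omega)) (4*m+2) m 2 (by omega) (by omega) (by omega),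
    sh3_eval (sp (cv w4 w4) (cv az az)) (4*m+3) (by omega),
    sh3_eval (sp (cv w4 w4) (cv az az)) (4*m+2) (by omega),
    sp_eval _ _ (fun c hc => U2_zero (by omega)) (4*m+3-3) m 0 (by omega) (by omega) (by omega),
    sp_eval _ _ (fun c hc => U2_zero (by omega)) (4*m+2-3) (m-1) 3 (by omega) (by omega) (by omega),
    sh3_sh3_spw4 (4*m+3) (by omega), sh3_sh3_spw4 (4*m+2) (by omega),
    show (4*m+3-6)/4 = m-1 by omega, show (4*m+2-6)/4 = m-1 by omega,
    sh3_sh3_d3_zero (4*m+3) (by omega), sh3_sh3_d3_zero (4*m+2) (by omega),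
    show m-1-1 = m-2 by omega, show m-1-2 = m-3 by omega,
    u0, u3, u4, u7, u8, u11, v2, v3, v6, v7, v10, v11]
  ring

lemma az_def (n : ℕ) : az n = (aa n : ℤ) := rfl

lemma Q2_cast (n : ℕ) : (Q2 n : ℤ) = cv az az n := by
  unfold Q2 cv
  push_cast
  rfl

lemma Q3_cast (n : ℕ) : (Q3 n : ℤ) = cv az (cv az az) n := by
  rw [Q3, cv]
  push_cast
  exact Finset.sum_congr rfl fun i _ => by rw [← Q2_cast]; rfl

lemma Eclaim : ∀ m : ℕ, (cv az az m - cv az az (m-1) ≤ 2) ∧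
    (aa m = 0 ∧ aa (m-1) = 1 → cv az az m - cv az az (m-1) ≤ 0) := by
  intro m
  induction m using Nat.strong_induction_on with
  | _ m ih =>
  rcases Nat.lt_or_ge m 12 with h | h
  · rw [← Q2_cast, ← Q2_cast]
    interval_cases m <;> exact ⟨by decide, by decide⟩
  · have hq3 : 3 ≤ m / 4 := by omega
    set q := m / 4 with hq
    have ihq := ih q (by omega)
    have haaq := aa_le_one q
    have haaq1 := aa_le_one (q-1)
    have haam : aa m = aa q := by rw [aa_div4 (by omega), ← hq]
    have hr : m % 4 = 0 ∨ m % 4 = 1 ∨ m % 4 = 2 ∨ m % 4 = 3 := by omega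
    rcases hr with hr | hr | hr | hr
    · -- m = 4q
      have hm1 : aa (m-1) = aa (q-1) := by
        rw [aa_div4 (by omega), show (m-1)/4 = q-1 by omega]
      have hm4 : m = 4*q := by omega
      rw [hm4] at haam hm1 ⊢
      rw [E0 q hq3]
      exact ⟨ihq.1, fun ⟨h1, h2⟩ => ihq.2 ⟨by omega, by omega⟩⟩
    · have hm1 : aa (m-1) = aa q := by
        rw [aa_div4 (by omega), show (m-1)/4 = q by omega]
      have hm4 : m = 4*q+1 := by omega
      rw [hm4] at haam hm1 ⊢
      rw [show 4*q+1-1 = 4*q by omega] at hm1 ⊢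
      rw [E1 q hq3]
      exact ⟨ihq.1, fun ⟨h1, h2⟩ => by omega⟩
    · have hm1 : aa (m-1) = aa q := by
        rw [aa_div4 (by omega), show (m-1)/4 = q by omega]
      have hm4 : m = 4*q+2 := by omega
      rw [hm4] at haam hm1 ⊢
      rw [show 4*q+2-1 = 4*q+1 by omega] at hm1 ⊢
      rw [E2 q hq3]
      exact ⟨ihq.1, fun ⟨h1, h2⟩ => by omega⟩
    · have hm1 : aa (m-1) = aa q := by
        rw [aa_div4 (by omega), show (m-1)/4 = q by omega]
      have hm4 : m = 4*q+3 := by omega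
      rw [hm4] at haam hm1 ⊢
      rw [show 4*q+3-1 = 4*q+2 by omega] at hm1 ⊢
      rw [E3 q hq3]
      constructor
      · by_cases hc : aa q = 0 ∧ aa (q-1) = 1
        · have h0 := ihq.2 hc
          rw [az_def, az_def, hc.1, hc.2]
          push_cast
          omega
        · have : 0 ≤ (aa q : ℤ) - (aa (q-1) : ℤ) := by
            rcases Nat.lt_or_ge 0 (aa q) with h' | h'
            · have : aa q = 1 := by omega
              simp [this]
              exact_mod_cast haaq1
            · have h1 : aa q = 0 := by omega
              have h2 : aa (q-1) = 0 := by
                rcases Nat.eq_or_lt_of_le haaq1 with h'' | h''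
                · exfalso; exact hc ⟨h1, h''⟩
                · omega
              simp [h1, h2]
          rw [az_def, az_def]
          have := ihq.1
          omega
      · rintro ⟨h1, h2⟩
        omega

lemma Dclaim : ∀ n : ℕ, 5 ≤ n → 3 ≤ cv az (cv az az) n - cv az (cv az az) (n-1) := by
  intro n
  induction n using Nat.strong_induction_on with
  | _ n ih =>
  intro hn
  rcases Nat.lt_or_ge n 24 with h | h
  · rw [← Q3_cast, ← Q3_cast]
    interval_cases n <;> decide
  · have hq3 : 3 ≤ n / 4 := by omega
    set q := n / 4 with hq
    have ihq := ih q (by omega) (by omega)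
    have ihq1 := ih (q-1) (by omega) (by omega)
    rw [show q-1-1 = q-2 by omega] at ihq1
    have hE1 := (Eclaim (q-1)).1
    rw [show q-1-1 = q-2 by omega] at hE1
    have hEq := (Eclaim q).1
    have haz : -1 ≤ az (q-1) - az (q-2) := by
      rw [az_def, az_def]
      have h1 := aa_le_one (q-2)
      have h2 : (0:ℤ) ≤ (aa (q-1) : ℤ) := by positivity
      have h3 : (aa (q-2) : ℤ) ≤ 1 := by exact_mod_cast h1
      omega
    have hr : n % 4 = 0 ∨ n % 4 = 1 ∨ n % 4 = 2 ∨ n % 4 = 3 := by omega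
    rcases hr with hr | hr | hr | hr
    · rw [show n = 4*q by omega, D0 q hq3]; linarith
    · rw [show n = 4*q+1 by omega, show 4*q+1-1 = 4*q by omega, D1 q hq3]; linarith
    · rw [show n = 4*q+2 by omega, show 4*q+2-1 = 4*q+1 by omega, D2 q hq3]; linarith
    · rw [show n = 4*q+3 by omega, show 4*q+3-1 = 4*q+2 by omega, D3 q hq3]; linarith


theorem stmt_15 : StrictMono (fun n : ℕ => r3 A n) := by
  apply strictMono_nat_of_lt_succ
  intro n
  show r3 A n < r3 A (n+1)
  rw [r3_eq, r3_eq]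
  rcases Nat.lt_or_ge n 4 with h | h
  · interval_cases n <;> decide
  · have hD := Dclaim (n+1) (by omega)
    rw [show n+1-1 = n from rfl] at hD
    have hc : (Q3 n : ℤ) < (Q3 (n+1) : ℤ) := by
      rw [Q3_cast, Q3_cast]; linarith
    exact_mod_cast hc
end

section
/- For every N ≥ 1, (4^k − 1)/3 ≤ |F ∩ [0, N)| where 4^k ≤ N < 4^{k+1}, and consequently |F ∩ [0,N)|/N ≥ 1/9 − o(1); in particular liminf |F ∩ [0,N)|/N ≥ 1/9. -/
/-!
`F` contains each block `[3·4^j, 4^(j+1))`, of length `4^j`. Below `4^k` these blocks contribute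
`∑_{j<k} 4^j = (4^k - 1)/3` elements, and for `3·4^k ≤ N < 4^(k+1)` the block `[3·4^k, N)`
adds `N - 3·4^k` more. Either way `N ≤ 9·|F ∩ [0,N)| + 9`, so `|F ∩ [0,N)|/N ≥ 1/9 - 1/N`.
-/

open Filter Topology

namespace Set

variable {s : Set ℕ} {a b : ℕ}

lemma ncard_inter_Iio_mono (hab : a ≤ b) : (s ∩ Iio a).ncard ≤ (s ∩ Iio b).ncard :=
  ncard_le_ncard (inter_subset_inter_right s (Iio_subset_Iio hab)) ((finite_Iio b).inter_of_right s)

lemma ncard_inter_Iio_add_le_of_Ico_subset (hab : a ≤ b) (h : Ico a b ⊆ s) :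
    (s ∩ Iio a).ncard + (b - a) ≤ (s ∩ Iio b).ncard := by
  have hdisj : Disjoint (s ∩ Iio a) (Ico a b) :=
    disjoint_left.2 fun n hn hn' => not_lt.2 hn'.1 hn.2
  have hsub : s ∩ Iio a ∪ Ico a b ⊆ s ∩ Iio b :=
    union_subset (inter_subset_inter_right s (Iio_subset_Iio hab))
      fun n hn => ⟨h hn, hn.2⟩
  calc (s ∩ Iio a).ncard + (b - a) = (s ∩ Iio a ∪ Ico a b).ncard := by
        rw [ncard_union_eq hdisj ((finite_Iio a).inter_of_right s) (finite_Ico a b), ncard_Ico_nat]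
    _ ≤ (s ∩ Iio b).ncard := ncard_le_ncard hsub ((finite_Iio b).inter_of_right s)

lemma ncard_inter_Iio_div_le_one (N : ℕ) : ((s ∩ Iio N).ncard : ℝ) / N ≤ 1 := by
  apply div_le_one_of_le₀ _ N.cast_nonneg
  exact_mod_cast (ncard_le_ncard inter_subset_right (finite_Iio N)).trans (ncard_Iio_nat N).le

end Set

lemma Ico_subset_F (k : ℕ) : Set.Ico (3 * 4 ^ k) (4 ^ (k + 1)) ⊆ F :=
  fun _ hn => ⟨k, hn⟩

lemma four_pow_sub_one_div_three_le_ncard (k : ℕ) :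
    (4 ^ k - 1) / 3 ≤ (F ∩ Set.Iio (4 ^ k)).ncard := by
  induction k with
  | zero => simp
  | succ k ih =>
    have hblock := Set.ncard_inter_Iio_add_le_of_Ico_subset (by rw [pow_succ]; omega)
      (Ico_subset_F k)
    have hmono := Set.ncard_inter_Iio_mono (s := F) (by omega : 4 ^ k ≤ 3 * 4 ^ k)
    rw [pow_succ] at hblock ⊢
    omega

lemma ncard_F_inter_Iio_lower_bound {N k : ℕ} (h1 : 4 ^ k ≤ N) (h2 : N < 4 ^ (k + 1)) :
    (4 ^ k - 1) / 3 + (N - 3 * 4 ^ k) ≤ (F ∩ Set.Iio N).ncard := by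
  have hpow := four_pow_sub_one_div_three_le_ncard k
  rcases le_total N (3 * 4 ^ k) with hN | hN
  · have := Set.ncard_inter_Iio_mono (s := F) h1
    omega
  · have hblock := Set.ncard_inter_Iio_add_le_of_Ico_subset hN
      ((Set.Ico_subset_Ico_right h2.le).trans (Ico_subset_F k))
    have hmono := Set.ncard_inter_Iio_mono (s := F) (by omega : 4 ^ k ≤ 3 * 4 ^ k)
    omega

lemma le_nine_mul_ncard_F_inter_Iio_add_nine (N : ℕ) : N ≤ 9 * (F ∩ Set.Iio N).ncard + 9 := by
  rcases Nat.eq_zero_or_pos N with rfl | hN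
  · simp
  have h1 := Nat.pow_log_le_self 4 hN.ne'
  have h2 := Nat.lt_pow_succ_log_self (by norm_num : 1 < 4) N
  have := ncard_F_inter_Iio_lower_bound h1 h2
  rw [pow_succ] at h2
  omega

lemma one_ninth_sub_inv_le_density {N : ℕ} (hN : 1 ≤ N) :
    1 / 9 - 1 / (N : ℝ) ≤ ((F ∩ Set.Iio N).ncard : ℝ) / N := by
  have hNpos : (0 : ℝ) < N := by exact_mod_cast hN
  have hcount : (N : ℝ) ≤ 9 * (F ∩ Set.Iio N).ncard + 9 := by
    exact_mod_cast le_nine_mul_ncard_F_inter_Iio_add_nine N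
  rw [div_sub_div _ _ (by norm_num) hNpos.ne', div_le_div_iff₀ (by positivity) hNpos]
  nlinarith

theorem stmt_19 :
    (∀ N k : ℕ, 1 ≤ N → 4 ^ k ≤ N → N < 4 ^ (k + 1) →
      (4 ^ k - 1) / 3 ≤ (F ∩ Set.Iio N).ncard) ∧
    (1 / 9 : ℝ) ≤ Filter.liminf (fun N : ℕ => ((F ∩ Set.Iio N).ncard : ℝ) / N) Filter.atTop := by
  refine ⟨fun N k _ h1 h2 =>
    (Nat.le_add_right _ _).trans (ncard_F_inter_Iio_lower_bound h1 h2), ?_⟩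
  have hlim : Tendsto (fun N : ℕ => 1 / 9 - 1 / (N : ℝ)) atTop (𝓝 (1 / 9)) := by
    simpa using
      (tendsto_const_nhds (x := (1 / 9 : ℝ))).sub tendsto_one_div_atTop_nhds_zero_nat
  calc (1 / 9 : ℝ) = liminf (fun N : ℕ => 1 / 9 - 1 / (N : ℝ)) atTop := hlim.liminf_eq.symm
    _ ≤ _ := liminf_le_liminf ((eventually_ge_atTop 1).mono fun N => one_ninth_sub_inv_le_density)
        hlim.isBoundedUnder_ge
        (isBoundedUnder_of ⟨1, Set.ncard_inter_Iio_div_le_one⟩).isCoboundedUnder_ge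
end
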